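/- arXiv:2311.15767 — 3 statements merged into one kernel-verified Lean document; each statement's English description precedes it below -/
import Mathlib

section
/- Let S : 𝓕 → 𝓖 be linear between normed spaces, F ⊆ 𝓕 non-empty, convex, balanced, N : 𝓕 → K^n linear, and suppose diam(N) := sup{‖Sf − Sg‖ : f,g ∈ F, Nf = Ng} is finite. If (f_k) is a sequence in 𝓕 with N(f_k) = y for all k and ‖f_k‖_F → 0 (Minkowski seminorm of F), then (S f_k) is a Cauchy sequence in 𝓖. -/
/-- If `diam(N)` is finite and `(f_k)` is a sequence with constant information
`N f_k = y` whose Minkowski seminorms tend to zero, then `(S f_k)` is Cauchy. -/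
theorem cauchy_of_gauge_tendsto_zero
    {K : Type*} [RCLike K] {𝓕 : Type*} [AddCommGroup 𝓕] [Module K 𝓕]
    {𝓖 : Type*} [NormedAddCommGroup 𝓖] [NormedSpace K 𝓖]
    {n : ℕ}
    (F : Set 𝓕) (hne : F.Nonempty)
    (hconv : ∀ f ∈ F, ∀ g ∈ F, ∀ a b : ℝ, 0 ≤ a → 0 ≤ b → a + b = 1 →
      (a : K) • f + (b : K) • g ∈ F)
    (hbal : ∀ f ∈ F, ∀ c : K, ‖c‖ ≤ 1 → c • f ∈ F)
    (hspan : Submodule.span K F = ⊤)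
    (S : 𝓕 →ₗ[K] 𝓖) (N : 𝓕 →ₗ[K] (Fin n → K))
    (gaugeF : 𝓕 → ℝ)
    (hgauge : ∀ f, gaugeF f = sInf {r : ℝ | 0 < r ∧ ((r : K))⁻¹ • f ∈ F})
    (D : ℝ)
    (hdiam : ∀ f ∈ F, ∀ g ∈ F, N f = N g → ‖S f - S g‖ ≤ D)
    (y : Fin n → K) (f : ℕ → 𝓕)
    (hinfo : ∀ k, N (f k) = y)
    (hto0 : Filter.Tendsto (fun k => gaugeF (f k)) Filter.atTop (nhds 0)) :
    CauchySeq (fun k => S (f k)) := by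
  classical
  obtain ⟨f0, hf0⟩ := hne
  have h0F : (0 : 𝓕) ∈ F := by
    have := hbal f0 hf0 0 (by simp)
    simpa using this
  have hD0 : 0 ≤ D := by
    have := hdiam 0 h0F 0 h0F rfl
    simpa using this
  -- F is absorbing
  have habs : ∀ g : 𝓕, ∃ r : ℝ, 0 < r ∧ ((r : K))⁻¹ • g ∈ F := by
    intro g
    have hg : g ∈ Submodule.span K F := by rw [hspan]; trivial
    induction hg using Submodule.span_induction with
    | mem x hx => exact ⟨1, one_pos, by simpa using hx⟩
    | zero => exact ⟨1, one_pos, by simpa using h0F⟩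
    | add x z hx hz ihx ihz =>
      obtain ⟨r, hr, hrF⟩ := ihx
      obtain ⟨s, hs, hsF⟩ := ihz
      have hrs : (0 : ℝ) < r + s := by linarith
      refine ⟨r + s, hrs, ?_⟩
      have hmem := hconv _ hrF _ hsF (r / (r + s)) (s / (r + s))
        (by positivity) (by positivity) (by field_simp)
      have h1 : ((r / (r + s) : ℝ) : K) • ((r : K))⁻¹ • x
          + ((s / (r + s) : ℝ) : K) • ((s : K))⁻¹ • z
          = (((r + s : ℝ) : K))⁻¹ • (x + z) := by
        rw [smul_smul, smul_smul, smul_add]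
        congr 1 <;> congr 1
        · have h : (r / (r + s)) * r⁻¹ = (r + s)⁻¹ := by
            field_simp
          exact_mod_cast h
        · have h : (s / (r + s)) * s⁻¹ = (r + s)⁻¹ := by
            field_simp
          exact_mod_cast h
      rw [← h1]
      exact hmem
    | smul c x hx ih =>
      obtain ⟨r, hr, hrF⟩ := ih
      set m : ℝ := max ‖c‖ 1 with hm
      have hm1 : (1 : ℝ) ≤ m := le_max_right _ _
      have hm0 : (0 : ℝ) < m := lt_of_lt_of_le one_pos hm1
      refine ⟨r * m, mul_pos hr hm0, ?_⟩
      have hd : ‖c * ((m : ℝ) : K)⁻¹‖ ≤ 1 := by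
        rw [norm_mul, norm_inv, RCLike.norm_ofReal, abs_of_pos hm0]
        rw [mul_inv_le_iff₀ hm0, one_mul]
        exact le_max_left _ _
      have hmem := hbal _ hrF _ hd
      have h1 : (c * ((m : ℝ) : K)⁻¹) • ((r : K))⁻¹ • x
          = (((r * m : ℝ) : K))⁻¹ • (c • x) := by
        rw [smul_smul, smul_smul]
        congr 1
        rw [RCLike.ofReal_mul, mul_inv]
        ring
      rw [← h1]
      exact hmem
  -- key bound
  have hkey : ∀ g : 𝓕, N g = 0 → ∀ r : ℝ, 0 < r → ((r : K))⁻¹ • g ∈ F →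
      ‖S g‖ ≤ r * D := by
    intro g hNg r hr hgF
    have hN' : N (((r : K))⁻¹ • g) = N (0 : 𝓕) := by
      simp [map_smul, hNg]
    have := hdiam _ hgF 0 h0F hN'
    rw [map_smul, map_zero, sub_zero, norm_smul, norm_inv, RCLike.norm_ofReal,
      abs_of_pos hr] at this
    calc ‖S g‖ = r * (r⁻¹ * ‖S g‖) := by field_simp
    _ ≤ r * D := by
        apply mul_le_mul_of_nonneg_left this hr.le
  rw [Metric.cauchySeq_iff]
  intro ε hε
  have hδ : 0 < ε / (2 * (D + 1)) := by positivity
  set δ := ε / (2 * (D + 1)) with hδdef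
  have hev : ∀ᶠ k in Filter.atTop, gaugeF (f k) < δ := by
    have := hto0.eventually (gt_mem_nhds hδ)
    exact this
  obtain ⟨K0, hK0⟩ := Filter.eventually_atTop.mp hev
  refine ⟨K0, fun a ha b hb => ?_⟩
  -- pick r, s
  have hsmall : ∀ k, K0 ≤ k → ∃ r : ℝ, 0 < r ∧ ((r : K))⁻¹ • f k ∈ F ∧ r < δ := by
    intro k hk
    have hne' : {r : ℝ | 0 < r ∧ ((r : K))⁻¹ • f k ∈ F}.Nonempty := by
      obtain ⟨r, hr, hrF⟩ := habs (f k)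
      exact ⟨r, hr, hrF⟩
    have hlt : sInf {r : ℝ | 0 < r ∧ ((r : K))⁻¹ • f k ∈ F} < δ := by
      rw [← hgauge]; exact hK0 k hk
    obtain ⟨r, ⟨hr1, hr2⟩, hr3⟩ := exists_lt_of_csInf_lt hne' hlt
    exact ⟨r, hr1, hr2, hr3⟩
  obtain ⟨r, hr, hrF, hrδ⟩ := hsmall a ha
  obtain ⟨s, hs, hsF, hsδ⟩ := hsmall b hb
  have hrs : (0 : ℝ) < r + s := by linarith
  -- (r+s)⁻¹ • (f a - f b) ∈ F
  have hsubF : (((r + s : ℝ) : K))⁻¹ • (f a - f b) ∈ F := by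
    have hnegF : ((s : K))⁻¹ • (-(f b)) ∈ F := by
      have := hbal _ hsF (-1) (by simp)
      simpa [smul_smul] using this
    have hmem := hconv _ hrF _ hnegF (r / (r + s)) (s / (r + s))
      (by positivity) (by positivity) (by field_simp)
    have h1 : ((r / (r + s) : ℝ) : K) • ((r : K))⁻¹ • f a
        + ((s / (r + s) : ℝ) : K) • ((s : K))⁻¹ • (-(f b))
        = (((r + s : ℝ) : K))⁻¹ • (f a - f b) := by
      rw [smul_smul, smul_smul, sub_eq_add_neg, smul_add]
      congr 1 <;> congr 1
      · have h : (r / (r + s)) * r⁻¹ = (r + s)⁻¹ := by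
          field_simp
        exact_mod_cast h
      · have h : (s / (r + s)) * s⁻¹ = (r + s)⁻¹ := by
          field_simp
        exact_mod_cast h
    rw [← h1]
    exact hmem
  have hN0 : N (f a - f b) = 0 := by
    rw [map_sub, hinfo, hinfo, sub_self]
  have hbound := hkey (f a - f b) hN0 (r + s) hrs hsubF
  rw [map_sub] at hbound
  rw [dist_eq_norm]
  calc ‖S (f a) - S (f b)‖ ≤ (r + s) * D := hbound
    _ ≤ (r + s) * (D + 1) := by nlinarith
    _ < (2 * δ) * (D + 1) := by nlinarith
    _ = ε := by rw [hδdef]; field_simp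
end

section
/- Under the same assumptions, if (f_k) and (f*_k) are two sequences in N⁻¹(y) with ‖f_k‖_F → 0 and ‖f*_k‖_F → 0, and diam(N) < ∞, then the limits of (S f_k) and (S f*_k) in the complete space 𝓖 coincide. -/
/-!
A point whose gauge is below `ε` lies in `ε • F`, so two points `x, x'` with `N x = N x'` and
gauges below `ε` satisfy `‖S x - S x'‖ ≤ ε * diam(N)`. Hence `‖S (f k) - S (f* k)‖` is at most
the larger of the two gauges times `diam(N)`, which tends to `0`, and the two limits agree.
Since the gauge is an `sInf` in `ℝ`, which is `0` on the empty set, this needs `F` to be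
absorbing: for balanced, midpoint-convex `F`, the `x` with `c • x ∈ F` for some `c ≠ 0` form
a submodule, which contains `F` and hence is everything.
-/

open Filter Topology

section

variable {K E : Type*} [RCLike K] [AddCommGroup E] [Module K E] {F : Set E}

lemma exists_smul_mem_of_mem_span (hF : Balanced K F) (h0 : (0 : E) ∈ F)
    (hmid : ∀ x ∈ F, ∀ y ∈ F, (2⁻¹ : K) • (x + y) ∈ F) {x : E}
    (hx : x ∈ Submodule.span K F) : ∃ c : K, c ≠ 0 ∧ c • x ∈ F := by
  induction hx using Submodule.span_induction with
  | mem x hx => exact ⟨1, one_ne_zero, by simpa using hx⟩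
  | zero => exact ⟨1, one_ne_zero, by simpa using h0⟩
  | add u v _ _ hu hv =>
    obtain ⟨c, hc, hcu⟩ := hu
    obtain ⟨d, hd, hdv⟩ := hv
    set e : K := ((min ‖c‖ ‖d‖ : ℝ) : K)
    have he_norm : ‖e‖ = min ‖c‖ ‖d‖ := by
      rw [RCLike.norm_ofReal, abs_of_nonneg (le_min (norm_nonneg c) (norm_nonneg d))]
    have he : e ≠ 0 :=
      norm_ne_zero_iff.1 (he_norm ▸ (lt_min (norm_pos_iff.2 hc) (norm_pos_iff.2 hd)).ne')
    have heu : e • u ∈ F := hF.smul_mem_mono hcu (he_norm ▸ min_le_left _ _)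
    have hev : e • v ∈ F := hF.smul_mem_mono hdv (he_norm ▸ min_le_right _ _)
    refine ⟨2⁻¹ * e, by simp [he], ?_⟩
    simpa [mul_smul, smul_add] using hmid _ heu _ hev
  | smul a u _ hu =>
    obtain ⟨c, hc, hcu⟩ := hu
    rcases eq_or_ne a 0 with rfl | ha
    · exact ⟨1, one_ne_zero, by simpa using h0⟩
    · exact ⟨c * a⁻¹, mul_ne_zero hc (inv_ne_zero ha),
        by rwa [smul_smul, inv_mul_cancel_right₀ ha]⟩

variable (K) in
noncomputable def minkowskiGauge (F : Set E) (x : E) : ℝ :=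
  sInf {r : ℝ | 0 < r ∧ ((r : K))⁻¹ • x ∈ F}

lemma minkowskiGauge_nonneg (x : E) : 0 ≤ minkowskiGauge K F x :=
  Real.sInf_nonneg fun _ hr => hr.1.le

lemma inv_smul_mem_of_minkowskiGauge_lt (hF : Balanced K F) {x : E}
    (hx : ∃ c : K, c ≠ 0 ∧ c • x ∈ F) {ε : ℝ} (h : minkowskiGauge K F x < ε) :
    ((ε : K))⁻¹ • x ∈ F := by
  obtain ⟨c, hc, hcx⟩ := hx
  have hne : {r : ℝ | 0 < r ∧ ((r : K))⁻¹ • x ∈ F}.Nonempty :=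
    ⟨‖c‖⁻¹, by positivity, hF.smul_mem_mono hcx (by simp)⟩
  obtain ⟨r, ⟨hr, hrx⟩, hrε⟩ := exists_lt_of_csInf_lt hne h
  refine hF.smul_mem_mono hrx ?_
  simp only [norm_inv, RCLike.norm_ofReal, abs_of_pos hr, abs_of_pos (hr.trans hrε)]
  exact inv_anti₀ hr hrε.le

variable {G V : Type*} [SeminormedAddCommGroup G] [NormedSpace K G] [AddCommGroup V] [Module K V]

lemma norm_map_sub_le_max_minkowskiGauge_mul (hF : Balanced K F)
    (habs : ∀ x, ∃ c : K, c ≠ 0 ∧ c • x ∈ F) (S : E →ₗ[K] G) (N : E →ₗ[K] V) {D : ℝ}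
    (hdiam : ∀ x ∈ F, ∀ y ∈ F, N x = N y → ‖S x - S y‖ ≤ D) {x y : E} (hxy : N x = N y) :
    ‖S x - S y‖ ≤ max (minkowskiGauge K F x) (minkowskiGauge K F y) * D := by
  set m := max (minkowskiGauge K F x) (minkowskiGauge K F y)
  have hscaled : ∀ ε > m, ‖S x - S y‖ ≤ ε * D := by
    intro ε hε
    have hε0 : 0 < ε := (le_max_of_le_left (minkowskiGauge_nonneg x)).trans_lt hε
    have hx := inv_smul_mem_of_minkowskiGauge_lt hF (habs x) (max_lt_iff.1 hε).1
    have hy := inv_smul_mem_of_minkowskiGauge_lt hF (habs y) (max_lt_iff.1 hε).2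
    have h := hdiam _ hx _ hy (by simp [hxy])
    rwa [map_smul, map_smul, ← smul_sub, norm_smul, norm_inv, RCLike.norm_ofReal,
      abs_of_pos hε0, inv_mul_le_iff₀ hε0] at h
  exact ge_of_tendsto (((continuous_id.mul continuous_const).tendsto m).mono_left
    nhdsWithin_le_nhds) (eventually_nhdsWithin_of_forall (s := Set.Ioi m) hscaled)

end

theorem limit_independent_of_sequence_general
    {K : Type*} [RCLike K] {𝓕 : Type*} [AddCommGroup 𝓕] [Module K 𝓕]
    {𝓖 : Type*} [NormedAddCommGroup 𝓖] [NormedSpace K 𝓖]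
    {n : ℕ}
    (F : Set 𝓕) (hne : F.Nonempty)
    (hconv : ∀ f ∈ F, ∀ g ∈ F, ∀ a b : ℝ, 0 ≤ a → 0 ≤ b → a + b = 1 →
      (a : K) • f + (b : K) • g ∈ F)
    (hbal : ∀ f ∈ F, ∀ c : K, ‖c‖ ≤ 1 → c • f ∈ F)
    (hspan : Submodule.span K F = ⊤)
    (S : 𝓕 →ₗ[K] 𝓖) (N : 𝓕 →ₗ[K] (Fin n → K))
    (gaugeF : 𝓕 → ℝ)
    (hgauge : ∀ f, gaugeF f = sInf {r : ℝ | 0 < r ∧ ((r : K))⁻¹ • f ∈ F})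
    (D : ℝ)
    (hdiam : ∀ f ∈ F, ∀ g ∈ F, N f = N g → ‖S f - S g‖ ≤ D)
    (y : Fin n → K)
    (f fstar : ℕ → 𝓕)
    (hinfo : ∀ k, N (f k) = y) (hinfostar : ∀ k, N (fstar k) = y)
    (hto0 : Filter.Tendsto (fun k => gaugeF (f k)) Filter.atTop (nhds 0))
    (hto0star : Filter.Tendsto (fun k => gaugeF (fstar k)) Filter.atTop (nhds 0))
    (g gstar : 𝓖)
    (hlim : Filter.Tendsto (fun k => S (f k)) Filter.atTop (nhds g))
    (hlimstar : Filter.Tendsto (fun k => S (fstar k)) Filter.atTop (nhds gstar)) :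
    g = gstar := by
  have hF : Balanced K F := balanced_iff_smul_mem.2 fun c hc x hx => hbal x hx c hc
  have hmid : ∀ x ∈ F, ∀ y ∈ F, (2⁻¹ : K) • (x + y) ∈ F := fun x hx y hy => by
    have h := hconv x hx y hy 2⁻¹ 2⁻¹ (by norm_num) (by norm_num) (by norm_num)
    rwa [RCLike.ofReal_inv, RCLike.ofReal_ofNat, ← smul_add] at h
  have habs : ∀ x, ∃ c : K, c ≠ 0 ∧ c • x ∈ F := fun x =>
    exists_smul_mem_of_mem_span hF (hF.zero_mem hne) hmid (hspan ▸ Submodule.mem_top)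
  obtain rfl : gaugeF = minkowskiGauge K F := funext hgauge
  have hbound : ∀ k, ‖S (f k) - S (fstar k)‖
      ≤ max (minkowskiGauge K F (f k)) (minkowskiGauge K F (fstar k)) * D := fun k =>
    norm_map_sub_le_max_minkowskiGauge_mul hF habs S N hdiam (by rw [hinfo, hinfostar])
  have hsmall : Tendsto (fun k => S (f k) - S (fstar k)) atTop (𝓝 0) :=
    squeeze_zero_norm hbound (by simpa using (hto0.max hto0star).mul_const D)
  exact sub_eq_zero.1 (tendsto_nhds_unique (hlim.sub hlimstar) hsmall)

/-- If two sequences in `N⁻¹(y)` have Minkowski seminorms tending to zero, then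
the limits of their images under `S` in the complete space `𝓖` coincide. -/
theorem limit_independent_of_sequence
    {K : Type*} [RCLike K] {𝓕 : Type*} [AddCommGroup 𝓕] [Module K 𝓕]
    {𝓖 : Type*} [NormedAddCommGroup 𝓖] [NormedSpace K 𝓖] [CompleteSpace 𝓖]
    {n : ℕ}
    (F : Set 𝓕) (hne : F.Nonempty)
    (hconv : ∀ f ∈ F, ∀ g ∈ F, ∀ a b : ℝ, 0 ≤ a → 0 ≤ b → a + b = 1 →
      (a : K) • f + (b : K) • g ∈ F)
    (hbal : ∀ f ∈ F, ∀ c : K, ‖c‖ ≤ 1 → c • f ∈ F)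
    (hspan : Submodule.span K F = ⊤)
    (S : 𝓕 →ₗ[K] 𝓖) (N : 𝓕 →ₗ[K] (Fin n → K))
    (gaugeF : 𝓕 → ℝ)
    (hgauge : ∀ f, gaugeF f = sInf {r : ℝ | 0 < r ∧ ((r : K))⁻¹ • f ∈ F})
    (D : ℝ)
    (hdiam : ∀ f ∈ F, ∀ g ∈ F, N f = N g → ‖S f - S g‖ ≤ D)
    (y : Fin n → K) (hy : y ∈ Set.range N)
    (f fstar : ℕ → 𝓕)
    (hinfo : ∀ k, N (f k) = y) (hinfostar : ∀ k, N (fstar k) = y)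
    (hto0 : Filter.Tendsto (fun k => gaugeF (f k)) Filter.atTop (nhds 0))
    (hto0star : Filter.Tendsto (fun k => gaugeF (fstar k)) Filter.atTop (nhds 0))
    (g gstar : 𝓖)
    (hlim : Filter.Tendsto (fun k => S (f k)) Filter.atTop (nhds g))
    (hlimstar : Filter.Tendsto (fun k => S (fstar k)) Filter.atTop (nhds gstar)) :
    g = gstar :=
  limit_independent_of_sequence_general F hne hconv hbal hspan S N gaugeF hgauge D hdiam y f fstar
    hinfo hinfostar hto0 hto0star g gstar hlim hlimstar
end

section
/- Let 𝓕 be the space of Lipschitz functions on [0,1] with norm ‖f‖ = max{‖f‖_∞, Lip(f)}, where Lip(f) is the Lipschitz constant. Fix n ∈ ℕ and n sample points x₁,…,xₙ ∈ [0,1]. Then there exist f, g in the unit ball of 𝓕 with f(xᵢ) = g(xᵢ) for all i, f(0)=g(0)=0, f(1)=g(1), both non-decreasing, and ‖f − g‖_∞ ≥ 1/(4n). -/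
/-! By pigeonhole one of the `2n` intervals `[k/(2n), (k+1)/(2n))` contains no sample point.
Let `T` be the tent of height `1/(4n)` over it. Since `T` is `1`-Lipschitz, both `t ↦ (t ± T t)/2`
are non-decreasing and `1`-Lipschitz; they agree wherever `T` vanishes (at `0`, at `1` and at
every sample point) and differ by `1/(4n)` at the apex. -/

open Set

lemma exists_forall_notMem_Ico_div {ι : Type*} [Fintype ι] {m : ℕ} (x : ι → ℝ)
    (hcard : Fintype.card ι < m) : ∃ k < m, ∀ i, x i ∉ Ico ((k : ℝ) / m) ((k + 1) / m) := by
  have hm : (0 : ℝ) < m := by exact_mod_cast (Nat.zero_le _).trans_lt hcard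
  have himage : (Finset.univ.image fun i => ⌊m * x i⌋₊).card < (Finset.range m).card := by
    simpa using Finset.card_image_le.trans_lt (by simpa using hcard)
  obtain ⟨k, hk, hkx⟩ := Finset.exists_mem_notMem_of_card_lt_card himage
  refine ⟨k, Finset.mem_range.1 hk, fun i ⟨hlo, hhi⟩ =>
    hkx (Finset.mem_image.2 ⟨i, Finset.mem_univ _, ?_⟩)⟩
  rw [div_le_iff₀' hm] at hlo
  rw [lt_div_iff₀' hm] at hhi
  exact Nat.floor_eq_iff ((Nat.cast_nonneg k).trans hlo) |>.2 ⟨hlo, hhi⟩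

lemma exists_sample_free_interval {n : ℕ} (hn : 0 < n) (x : Fin n → ℝ) :
    ∃ c : ℝ, 1 / (4 * n) ≤ c ∧ c + 1 / (4 * n) ≤ 1 ∧ ∀ i, 1 / (4 * n) ≤ |x i - c| := by
  obtain ⟨k, hk, hfree⟩ := exists_forall_notMem_Ico_div x (by simp; omega : Fintype.card (Fin n) < 2 * n)
  have hn' : (0 : ℝ) < n := by exact_mod_cast hn
  have hk' : (k : ℝ) + 1 ≤ 2 * n := by exact_mod_cast hk
  have hlo : (2 * k + 1) / (4 * n) - 1 / (4 * n) = (k : ℝ) / (2 * n) := by field_simp; ring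
  have hhi : (2 * k + 1) / (4 * n) + 1 / (4 * n) = ((k : ℝ) + 1) / (2 * n) := by
    field_simp; ring
  refine ⟨(2 * k + 1) / (4 * n), ?_, ?_, fun i => ?_⟩
  · linarith [show (0 : ℝ) ≤ k / (2 * n) by positivity]
  · rwa [hhi, div_le_one (by positivity)]
  · by_contra hlt
    obtain ⟨hxlo, hxhi⟩ := abs_sub_lt_iff.1 (not_le.1 hlt)
    exact hfree i ⟨by push_cast; linarith, by push_cast; linarith⟩

def tent (c h t : ℝ) : ℝ := max 0 (h - |t - c|)

lemma lipschitzWith_tent (c h : ℝ) : LipschitzWith 1 (tent c h) :=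
  .of_dist_le_mul fun s t => by
    simp only [tent, Real.dist_eq, NNReal.coe_one, one_mul]
    calc |max 0 (h - |s - c|) - max 0 (h - |t - c|)|
        ≤ |(h - |s - c|) - (h - |t - c|)| := by
          simpa only [max_comm] using abs_max_sub_max_le_abs _ _ 0
      _ = |abs (t - c) - abs (s - c)| := by ring_nf
      _ ≤ |(t - c) - (s - c)| := abs_abs_sub_abs_le_abs_sub _ _
      _ = |s - t| := by rw [sub_sub_sub_cancel_right, abs_sub_comm]

lemma tent_eq_zero {c h t : ℝ} (ht : h ≤ |t - c|) : tent c h t = 0 :=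
  max_eq_left (by linarith)

lemma tent_self {c h : ℝ} (hh : 0 ≤ h) : tent c h c = h := by
  simp [tent, hh]

section
variable {T : ℝ → ℝ}

lemma monotone_half_add_of_lipschitzWith_one (hT : LipschitzWith 1 T) :
    Monotone fun t => (t + T t) / 2 := fun s t hst => by
  have := (abs_le.1 (by simpa [Real.dist_eq] using hT.dist_le_mul t s)).1
  rw [abs_of_nonneg (sub_nonneg.2 hst)] at this
  linarith

lemma lipschitzWith_one_half_add (hT : LipschitzWith 1 T) :
    LipschitzWith 1 fun t => (t + T t) / 2 :=
  .of_dist_le_mul fun s t => by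
    have hTst : |T s - T t| ≤ |s - t| := by simpa [Real.dist_eq] using hT.dist_le_mul s t
    simp only [Real.dist_eq, NNReal.coe_one, one_mul]
    calc |(s + T s) / 2 - (t + T t) / 2| = |(s - t) + (T s - T t)| / 2 := by
          rw [← abs_two, ← abs_div]; ring_nf
      _ ≤ |s - t| := by linarith [abs_add_le (s - t) (T s - T t)]

end

lemma abs_le_one_of_lipschitzWith_one {F : ℝ → ℝ} (hF : LipschitzWith 1 F) (h0 : F 0 = 0)
    {y : ℝ} (hy : y ∈ Icc (0 : ℝ) 1) : |F y| ≤ 1 := by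
  have := hF.dist_le_mul y 0
  simp only [Real.dist_eq, h0, sub_zero, NNReal.coe_one, one_mul] at this
  exact this.trans (abs_le.2 ⟨by linarith [hy.1], hy.2⟩)

theorem lipschitz_fooling_pair_general
    (n : ℕ) (hn : 0 < n) (x : Fin n → ℝ) :
    ∃ f g : ℝ → ℝ,
      LipschitzOnWith 1 f (Set.Icc 0 1) ∧
      LipschitzOnWith 1 g (Set.Icc 0 1) ∧
      (∀ y ∈ Set.Icc (0:ℝ) 1, |f y| ≤ 1) ∧
      (∀ y ∈ Set.Icc (0:ℝ) 1, |g y| ≤ 1) ∧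
      MonotoneOn f (Set.Icc 0 1) ∧
      MonotoneOn g (Set.Icc 0 1) ∧
      (∀ i, f (x i) = g (x i)) ∧
      f 0 = 0 ∧ g 0 = 0 ∧ f 1 = g 1 ∧
      ∃ z ∈ Set.Icc (0:ℝ) 1, 1 / (4 * n) ≤ |f z - g z| := by
  obtain ⟨c, hc0, hc1, hfar⟩ := exists_sample_free_interval hn x
  set h : ℝ := 1 / (4 * n)
  have hh : 0 ≤ h := by positivity
  have hT0 : tent c h 0 = 0 :=
    tent_eq_zero (by rwa [zero_sub, abs_neg, abs_of_nonneg (hh.trans hc0)])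
  have hT1 : tent c h 1 = 0 := tent_eq_zero (by rw [abs_of_nonneg (by linarith)]; linarith)
  have hT := lipschitzWith_tent c h
  have hf := lipschitzWith_one_half_add hT.neg
  have hg := lipschitzWith_one_half_add hT
  refine ⟨fun t => (t + -tent c h t) / 2, fun t => (t + tent c h t) / 2,
    hf.lipschitzOnWith, hg.lipschitzOnWith,
    fun y => abs_le_one_of_lipschitzWith_one hf (by simp [hT0]),
    fun y => abs_le_one_of_lipschitzWith_one hg (by simp [hT0]),
    (monotone_half_add_of_lipschitzWith_one hT.neg).monotoneOn _,
    (monotone_half_add_of_lipschitzWith_one hT).monotoneOn _,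
    fun i => by simp only [tent_eq_zero (hfar i), neg_zero],
    by simp [hT0], by simp [hT0], by simp [hT1],
    c, ⟨by linarith, by linarith⟩, ?_⟩
  change h ≤ |(c + -tent c h c) / 2 - (c + tent c h c) / 2|
  rw [tent_self hh, show (c + -h) / 2 - (c + h) / 2 = -h by ring, abs_neg, abs_of_nonneg hh]

/-- For any `n` sample points in `[0,1]` there exist two non-decreasing
functions in the unit ball of the Lipschitz space on `[0,1]` that agree at all
sample points, vanish at `0`, agree at `1`, and differ by at least `1/(4n)` in
the sup-norm. -/
theorem lipschitz_fooling_pair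
    (n : ℕ) (hn : 0 < n) (x : Fin n → ℝ) (hx : ∀ i, x i ∈ Set.Icc (0:ℝ) 1) :
    ∃ f g : ℝ → ℝ,
      LipschitzOnWith 1 f (Set.Icc 0 1) ∧
      LipschitzOnWith 1 g (Set.Icc 0 1) ∧
      (∀ y ∈ Set.Icc (0:ℝ) 1, |f y| ≤ 1) ∧
      (∀ y ∈ Set.Icc (0:ℝ) 1, |g y| ≤ 1) ∧
      MonotoneOn f (Set.Icc 0 1) ∧
      MonotoneOn g (Set.Icc 0 1) ∧
      (∀ i, f (x i) = g (x i)) ∧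
      f 0 = 0 ∧ g 0 = 0 ∧ f 1 = g 1 ∧
      ∃ z ∈ Set.Icc (0:ℝ) 1, 1 / (4 * n) ≤ |f z - g z| :=
  lipschitz_fooling_pair_general n hn x
end
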